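/- The density of the limit law of the Hadamard quantum walk integrates to one: ∫_{-1/√2}^{1/√2} 1 / (π (1 - x²) √(1 - 2x²)) dx = 1. -/

import Mathlib

open Real Set intervalIntegral

/-!
The substitution `u = x / √(1 - x²)` maps `[-1/√2, 1/√2]` onto `[-1, 1]`, and since
`1 - u² = (1 - 2x²) / (1 - x²)`, the function `arcsin (x / √(1 - x²))` is an antiderivative of
`1 / ((1 - x²) √(1 - 2x²))`. It is continuous up to the endpoints, where it takes the values
`∓π/2`, so the fundamental theorem of calculus gives the integral `π`.
-/

lemma one_sub_sq_div_sqrt_one_sub_sq {x : ℝ} (hx : x ^ 2 < 1) :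
    1 - (x / √(1 - x ^ 2)) ^ 2 = (1 - 2 * x ^ 2) / (1 - x ^ 2) := by
  have h : 1 - x ^ 2 ≠ 0 := by linarith
  rw [div_pow, sq_sqrt (by linarith)]
  field_simp
  ring

lemma hasDerivAt_div_sqrt_one_sub_sq {x : ℝ} (hx : x ^ 2 < 1) :
    HasDerivAt (fun x => x / √(1 - x ^ 2)) (1 / ((1 - x ^ 2) * √(1 - x ^ 2))) x := by
  have hpos : 0 < 1 - x ^ 2 := by linarith
  have hinner : HasDerivAt (fun x : ℝ => 1 - x ^ 2) (-(2 * x)) x := by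
    simpa using (hasDerivAt_pow 2 x).const_sub 1
  refine ((hasDerivAt_id' x).div (hinner.sqrt hpos.ne') (sqrt_pos.2 hpos).ne').congr_deriv ?_
  field_simp
  rw [sq_sqrt hpos.le]
  ring

lemma hasDerivAt_arcsin_div_sqrt_one_sub_sq {x : ℝ} (hx : 2 * x ^ 2 < 1) :
    HasDerivAt (fun x => arcsin (x / √(1 - x ^ 2)))
      (1 / ((1 - x ^ 2) * √(1 - 2 * x ^ 2))) x := by
  have hx1 : x ^ 2 < 1 := by nlinarith
  have hpos : 0 < 1 - x ^ 2 := by linarith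
  have hpos2 : 0 < 1 - 2 * x ^ 2 := by linarith
  have hu := one_sub_sq_div_sqrt_one_sub_sq hx1
  have hu1 : (x / √(1 - x ^ 2)) ^ 2 < 1 := by
    have : 0 < (1 - 2 * x ^ 2) / (1 - x ^ 2) := div_pos hpos2 hpos
    linarith
  have hne : x / √(1 - x ^ 2) ≠ -1 ∧ x / √(1 - x ^ 2) ≠ 1 := by
    constructor <;> intro h <;> rw [h] at hu1 <;> norm_num at hu1
  refine ((hasDerivAt_arcsin hne.1 hne.2).comp x
    (hasDerivAt_div_sqrt_one_sub_sq hx1)).congr_deriv ?_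
  rw [hu, sqrt_div hpos2.le]
  have := sqrt_pos.2 hpos
  have := sqrt_pos.2 hpos2
  field_simp

lemma continuousOn_arcsin_div_sqrt_one_sub_sq :
    ContinuousOn (fun x => arcsin (x / √(1 - x ^ 2))) {x | x ^ 2 < 1} :=
  continuous_arcsin.comp_continuousOn <| continuousOn_id.div (by fun_prop) fun x hx =>
    (sqrt_pos.2 (sub_pos.2 hx)).ne'

lemma integral_one_div_one_sub_sq_mul_sqrt_one_sub_two_mul_sq {a b : ℝ} (hab : a ≤ b)
    (ha : 2 * a ^ 2 ≤ 1) (hb : 2 * b ^ 2 ≤ 1) :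
    ∫ x in a..b, 1 / ((1 - x ^ 2) * √(1 - 2 * x ^ 2)) =
      arcsin (b / √(1 - b ^ 2)) - arcsin (a / √(1 - a ^ 2)) := by
  have hIcc : ∀ x ∈ Icc a b, 2 * x ^ 2 ≤ 1 := fun x hx => by
    rcases le_total 0 x with h | h <;> nlinarith [hx.1, hx.2]
  have hIoo : ∀ x ∈ Ioo a b, 2 * x ^ 2 < 1 := fun x hx => by
    rcases le_total 0 x with h | h <;> nlinarith [hx.1, hx.2]
  have hcont : ContinuousOn (fun x => arcsin (x / √(1 - x ^ 2))) (Icc a b) :=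
    continuousOn_arcsin_div_sqrt_one_sub_sq.mono fun x hx =>
      show x ^ 2 < 1 by nlinarith [hIcc x hx]
  have hderiv : ∀ x ∈ Ioo a b, HasDerivAt (fun x => arcsin (x / √(1 - x ^ 2)))
      (1 / ((1 - x ^ 2) * √(1 - 2 * x ^ 2))) x :=
    fun x hx => hasDerivAt_arcsin_div_sqrt_one_sub_sq (hIoo x hx)
  have hnonneg : ∀ x ∈ Ioo a b, 0 ≤ 1 / ((1 - x ^ 2) * √(1 - 2 * x ^ 2)) := fun x hx => by
    have : 0 ≤ 1 - x ^ 2 := by nlinarith [hIoo x hx]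
    positivity
  have hint : IntervalIntegrable (fun x => 1 / ((1 - x ^ 2) * √(1 - 2 * x ^ 2)))
      MeasureTheory.volume a b :=
    (intervalIntegrable_iff_integrableOn_Ioc_of_le hab).2
      (integrableOn_deriv_of_nonneg hcont hderiv hnonneg)
  exact integral_eq_sub_of_hasDerivAt_of_le hab hcont hderiv hint

lemma arcsin_one_div_sqrt_two_div_sqrt_one_sub_sq :
    arcsin ((1 / √2) / √(1 - (1 / √2) ^ 2)) = π / 2 := by
  have h : (1 : ℝ) - (1 / √2) ^ 2 = (1 / √2) ^ 2 := by
    rw [div_pow, sq_sqrt zero_le_two]; norm_num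
  rw [h, sqrt_sq (by positivity), div_self (by positivity), arcsin_one]

theorem hadamard_density_integrates_to_one :
    ∫ x in (-(1 / Real.sqrt 2) : ℝ)..(1 / Real.sqrt 2),
      1 / (π * (1 - x ^ 2) * Real.sqrt (1 - 2 * x ^ 2)) = 1 := by
  have hc : 2 * (1 / √2) ^ 2 = 1 := by
    rw [div_pow, sq_sqrt zero_le_two]; norm_num
  have hc' : 2 * (-(1 / √2)) ^ 2 = 1 := by rw [neg_sq, hc]
  have hπ : (fun x : ℝ => 1 / (π * (1 - x ^ 2) * √(1 - 2 * x ^ 2))) =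
      fun x => π⁻¹ * (1 / ((1 - x ^ 2) * √(1 - 2 * x ^ 2))) := by
    ext x
    rw [one_div, one_div, mul_assoc, mul_inv]
  rw [hπ, integral_const_mul, integral_one_div_one_sub_sq_mul_sqrt_one_sub_two_mul_sq
    (neg_le_self (by positivity)) hc'.le hc.le,
    neg_sq, neg_div, arcsin_neg, arcsin_one_div_sqrt_two_div_sqrt_one_sub_sq]
  field_simp
  ring
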